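/- arXiv:1709.02442 — 3 statements merged into one kernel-verified Lean document; each statement's English description precedes it below -/
import Mathlib

section
/- Let $a, b, c \ge 1$ be integers, $p$ a prime with $p > a$ and $p > b+c$, and $\gcd(p,a)=1$. Fix $1 \le j \le a$ and let $u_j, v_j$ be the unique integers with $1 \le u_j \le a$, $0 \le v_j \le p-1$, and $j-1+(a-1)(p-1)=p(u_j-1)+a v_j$. Suppose $(i,j)$ satisfies $1 \le i \le b+c-1$ and $j \le \lceil -\frac{a}{b+c} i + a \rceil - 1$, and suppose nonnegative integers $k_0,\dots,k_c$ satisfy $k_0+\cdots+k_c = v_j$ and $p \mid b v_j + c k_c + (c-1)k_{c-1} + \cdots + k_1 + i$. Setting $s = (b v_j + c k_c + \cdots + k_1 + i)/p$, we have $u_j \le \lceil -\frac{a}{b+c} s + a \rceil - 1$. -/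
theorem stmt_2 (a b c p : ℤ) (ha : 1 ≤ a) (hb : 1 ≤ b) (hc : 1 ≤ c)
    (hp : Prime p) (hpa : a < p) (hpbc : b + c < p) (hcop : IsCoprime p a)
    (j u v : ℤ) (hj1 : 1 ≤ j) (hj2 : j ≤ a)
    (hu1 : 1 ≤ u) (hu2 : u ≤ a) (hv1 : 0 ≤ v) (hv2 : v ≤ p - 1)
    (heq : j - 1 + (a - 1) * (p - 1) = p * (u - 1) + a * v)
    (i : ℤ) (hi1 : 1 ≤ i) (hi2 : i ≤ b + c - 1)
    (hij : j ≤ ⌈-(a : ℚ) / (b + c) * i + a⌉ - 1)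
    (k : ℕ → ℤ) (hk0 : ∀ t : ℕ, t ≤ c.toNat → 0 ≤ k t)
    (hksum : ∑ t ∈ Finset.range (c.toNat + 1), k t = v)
    (hdvd : p ∣ b * v + (∑ t ∈ Finset.range (c.toNat + 1), (t : ℤ) * k t) + i)
    (s : ℤ)
    (hs : p * s = b * v + (∑ t ∈ Finset.range (c.toNat + 1), (t : ℤ) * k t) + i) :
    u ≤ ⌈-(a : ℚ) / (b + c) * s + a⌉ - 1 := by
  set S : ℤ := ∑ t ∈ Finset.range (c.toNat + 1), (t : ℤ) * k t with hS
  have hbc : (0:ℤ) < b + c := by linarith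
  have hppos : (0:ℤ) < p := by linarith
  have hcQ : ((b:ℚ) + c) > 0 := by exact_mod_cast hbc
  have hcQne : ((b:ℚ) + c) ≠ 0 := ne_of_gt hcQ
  -- bound the weighted sum
  have hSbound : S ≤ c * v := by
    rw [hS, ← hksum, Finset.mul_sum]
    apply Finset.sum_le_sum
    intro t ht
    have htc : t ≤ c.toNat := by
      have := Finset.mem_range.mp ht; omega
    have h1 : (t : ℤ) ≤ c := by
      have : (t:ℤ) ≤ (c.toNat : ℤ) := by exact_mod_cast htc
      omega
    exact mul_le_mul_of_nonneg_right h1 (hk0 t htc)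
  -- from hij, linear inequality
  have hjQ : (j:ℚ) < -(a : ℚ) / (b + c) * i + a := by
    have h : j < ⌈-(a : ℚ) / (b + c) * i + a⌉ := by omega
    exact Int.lt_ceil.mp h
  have key1 : (b + c) * j + a * i ≤ a * (b + c) - 1 := by
    have h2 : ((b:ℚ) + c) * j + a * i < a * ((b:ℚ) + c) := by
      have h3 : -(a : ℚ) / (b + c) * i * (b + c) = -(a:ℚ) * i := by
        field_simp
      nlinarith [mul_lt_mul_of_pos_right hjQ hcQ]
    have h4 : (b + c) * j + a * i < a * (b + c) := by exact_mod_cast h2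
    omega
  -- key multiplication identity and bound
  have h1 : (b+c) * (j - 1 + (a - 1) * (p - 1)) = (b+c)*(p * (u - 1)) + (b+c)*(a * v) := by
    rw [heq]; ring
  have h2 : a * (p * s) = a * (b * v + S + i) := by rw [hs]
  have haS : a * S ≤ a * (c * v) := mul_le_mul_of_nonneg_left hSbound (by linarith)
  have key2 : p * ((b+c)*u + a*s) < p * (a*(b+c)) := by nlinarith [h1, h2, haS, key1]
  have key3 : (b+c)*u + a*s < a*(b+c) := lt_of_mul_lt_mul_left key2 (le_of_lt hppos)
  -- conclude
  have huQ : (u:ℚ) < -(a : ℚ) / (b + c) * s + a := by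
    have h5 : ((b:ℚ)+c)*u + a*s < a*((b:ℚ)+c) := by exact_mod_cast key3
    rw [show -(a : ℚ) / (b + c) * s + a = (-(a:ℚ)*s + a*((b:ℚ)+c))/((b:ℚ)+c) by
      field_simp]
    rw [lt_div_iff₀ hcQ]
    nlinarith [h5]
  have : u < ⌈-(a : ℚ) / (b + c) * s + a⌉ := Int.lt_ceil.mpr huQ
  omega
end

section
/- Let $a,b,c \ge 1$, $p$ prime with $p > a$, $p > b+c$, $\gcd(p,a)=1$. Fix $1 \le j \le a$ with associated $u_j, v_j$ satisfying $j-1+(a-1)(p-1)=p(u_j-1)+a v_j$, $1 \le u_j \le a$, $0 \le v_j \le p-1$. Suppose $(i,j)$ is an interior lattice point of the Newton polygon (so either $1 \le i \le b$ and $\lfloor -\frac{a}{b}i+a \rfloor + 1 \le j$, or $b+1 \le i \le b+c-1$ and $j \ge 1$; and in both cases $j \le \lceil -\frac{a}{b+c}i+a\rceil -1$), and nonnegative integers $k_0,\dots,k_c$ satisfy $k_0+\cdots+k_c=v_j$ and $p \mid b v_j + c k_c + \cdots + k_1 + i$. Let $s = (b v_j + c k_c + \cdots + k_1 + i)/p$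 and assume $1 \le s \le b$. Then $\lfloor -\frac{a}{b} s + a \rfloor + 1 \le u_j$. -/
theorem stmt_3 (a b c p : ℤ) (ha : 1 ≤ a) (hb : 1 ≤ b) (hc : 1 ≤ c)
    (hp : Prime p) (hpa : a < p) (hpbc : b + c < p) (hcop : IsCoprime p a)
    (j u v : ℤ) (hj1 : 1 ≤ j) (hj2 : j ≤ a)
    (hu1 : 1 ≤ u) (hu2 : u ≤ a) (hv1 : 0 ≤ v) (hv2 : v ≤ p - 1)
    (heq : j - 1 + (a - 1) * (p - 1) = p * (u - 1) + a * v)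
    (i : ℤ)
    (hint : (1 ≤ i ∧ i ≤ b ∧ ⌊-(a : ℚ) / b * i + a⌋ + 1 ≤ j) ∨
      (b + 1 ≤ i ∧ i ≤ b + c - 1 ∧ 1 ≤ j))
    (hij : j ≤ ⌈-(a : ℚ) / (b + c) * i + a⌉ - 1)
    (k : ℕ → ℤ) (hk0 : ∀ t : ℕ, t ≤ c.toNat → 0 ≤ k t)
    (hksum : ∑ t ∈ Finset.range (c.toNat + 1), k t = v)
    (s : ℤ)
    (hs : p * s = b * v + (∑ t ∈ Finset.range (c.toNat + 1), (t : ℤ) * k t) + i)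
    (hs1 : 1 ≤ s) (hs2 : s ≤ b) :
    ⌊-(a : ℚ) / b * s + a⌋ + 1 ≤ u := by
  have hp0 : (0:ℤ) < p := by linarith
  have hbq : (0:ℚ) < (b:ℚ) := by exact_mod_cast (by linarith : (0:ℤ) < b)
  have hSig : 0 ≤ ∑ t ∈ Finset.range (c.toNat + 1), (t : ℤ) * k t := by
    apply Finset.sum_nonneg
    intro t ht
    have h1 : 0 ≤ k t := hk0 t (by have := Finset.mem_range.mp ht; omega)
    have h2 : (0:ℤ) ≤ (t:ℤ) := Int.natCast_nonneg t
    exact mul_nonneg h2 h1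
  set S := ∑ t ∈ Finset.range (c.toNat + 1), (t : ℤ) * k t with hS
  have hib : a * (b - i) < b * j := by
    rcases hint with ⟨hi1, hi2, hfl⟩ | ⟨hi1, hi2, hj'⟩
    · have hx : (-(a:ℚ)/b * i + a) < j := Int.floor_lt.mp (by linarith)
      have hx2 : ((a:ℚ) * (b - i)) < b * j := by
        have := (mul_lt_mul_of_pos_left hx hbq)
        field_simp at this ⊢
        nlinarith [this]
      exact_mod_cast hx2
    · nlinarith
  have hkey : a * b - a * s < u * b := by
    have h1 : p * (a * (b - s)) < p * (u * b) := by nlinarith [mul_nonneg (by linarith : (0:ℤ) ≤ a) hSig]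
    nlinarith [hp0]
  have hfin : (-(a:ℚ)/b * s + a) < u := by
    rw [show (-(a:ℚ)/b * s + a) = ((a:ℚ)*b - a*s)/b by field_simp; ring, div_lt_iff₀ hbq]
    exact_mod_cast hkey
  have := Int.floor_lt.mpr hfin
  omega
end

section
/- Let $p$ be a prime of the form $p = 3f+1$ and write $p = a_3^2 + 3 b_3^2$ with $a_3 \equiv 1 \pmod 3$. Then $\binom{2f}{f} \equiv 2a_3 \pmod p$ if $b_3 \equiv 0 \pmod 3$, $\binom{2f}{f} \equiv -a_3 - 3b_3 \pmod p$ if $b_3 \equiv 1 \pmod 3$, and $\binom{2f}{f} \equiv -a_3 + 3b_3 \pmod p$ if $b_3 \equiv 2 \pmod 3$. -/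
/-!
Gauss's argument with the Jacobi sum `J = J(χ, χ)` of a cubic character `χ` of a finite field
`𝔽_q`, `q = 3f + 1`, with values in `ℤ[ω]`. Write `J = X + Yω`. The congruence
`J ≡ -1 mod (ω - 1)²` gives `X ≡ -1`, `Y ≡ 0 (mod 3)`, and since `J(χ⁻¹, χ⁻¹)` is the conjugate
`X + Yω²`, the identity `J(χ, χ) J(χ⁻¹, χ⁻¹) = q` gives `X² - XY + Y² = q`. If `χ` sends a generator
`g` of `𝔽_q^×` to `ω`, the reduction `ℤ[ω] → 𝔽_q`, `ω ↦ g^(2f)`, turns `χ` into `t ↦ t^(2f)` and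
`χ⁻¹` into `t ↦ t^f`, so `J` and its conjugate reduce to `∑ t^(2f) (1 - t)^(2f) = -(-1)^f C(2f, f)`
and `∑ t^f (1 - t)^f = 0`; eliminating `ω` gives `(-1)^f C(2f, f) = Y - 2X`.
For `q = p`, `L = Y - 2X` satisfies `L² + 27 (Y/3)² = 4p` and `L ≡ 2 (mod 3)`, which determines `L`
among the representations of `4p` by `a² + 27 b²`; each residue of `b₃` supplies one such
representation built from `a₃` and `b₃`.
-/

open Finset Algebra

namespace FiniteField

variable {F : Type*} [Field F] [Fintype F]

theorem sum_pow_of_pos {i : ℕ} (hi : 0 < i) :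
    ∑ x : F, x ^ i = if Fintype.card F - 1 ∣ i then -1 else 0 := by
  classical
  rw [← sum_pow_units, ← Fintype.sum_subtype_add_sum_subtype (· = (0 : F)),
    sum_eq_zero fun x _ => by rw [x.2, zero_pow hi.ne'], zero_add]
  exact Fintype.sum_equiv unitsEquivNeZero.symm _ _ fun _ => rfl

theorem sum_pow_mul_one_sub_pow {a b : ℕ} (ha : 0 < a) (haq : a ≤ Fintype.card F - 1)
    (hab : a + b < 2 * (Fintype.card F - 1)) :
    ∑ x : F, x ^ a * (1 - x) ^ b =
      -((-1) ^ (Fintype.card F - 1 - a) * (b.choose (Fintype.card F - 1 - a) : F)) := by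
  set q := Fintype.card F
  have hexpand (x : F) : x ^ a * (1 - x) ^ b =
      ∑ k ∈ range (b + 1), (-1) ^ k * (b.choose k : F) * x ^ (a + k) := by
    rw [sub_eq_neg_add, add_pow, mul_sum]
    refine sum_congr rfl fun k _ => ?_
    rw [neg_pow, one_pow, pow_add]
    ring
  have hpowsum (k : ℕ) (hk : k ∈ range (b + 1)) :
      ∑ x : F, x ^ (a + k) = if q - 1 - a = k then -1 else 0 := by
    rw [sum_pow_of_pos (by omega)]
    refine if_congr ⟨fun h => ?_, fun h => ⟨1, by omega⟩⟩ rfl rfl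
    have := Nat.eq_of_dvd_of_lt_two_mul (by omega) h (by rw [mem_range] at hk; omega)
    omega
  simp_rw [hexpand]
  rw [sum_comm]
  simp_rw [← mul_sum]
  rw [sum_congr rfl fun k hk => by rw [hpowsum k hk, mul_ite, mul_neg_one, mul_zero], sum_ite_eq]
  split_ifs with h
  · ring
  · rw [Nat.choose_eq_zero_of_lt (by rw [mem_range] at h; omega)]
    simp

end FiniteField

def powMulChar (F : Type*) [Field F] (n : ℕ) (hn : n ≠ 0) : MulChar F F where
  toFun x := x ^ n
  map_one' := one_pow n
  map_mul' x y := mul_pow x y n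
  map_nonunit' x hx := by rw [isUnit_iff_ne_zero, not_not] at hx; rw [hx, zero_pow hn]

theorem jacobiSum_powMulChar {F : Type*} [Field F] [Fintype F] {a b : ℕ} (ha : a ≠ 0)
    (hb : b ≠ 0) :
    jacobiSum (powMulChar F a ha) (powMulChar F b hb) = ∑ x : F, x ^ a * (1 - x) ^ b :=
  rfl

theorem FiniteField.isPrimitiveRoot_generator_pow {F : Type*} [Field F] [Fintype F] {g : Fˣ}
    (hg : ∀ x, x ∈ Subgroup.zpowers g) {k f : ℕ} (hF : Fintype.card F = k * f + 1) :
    IsPrimitiveRoot ((g : F) ^ f) k := by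
  classical
  have hg' : IsPrimitiveRoot (g : F) (k * f) := by
    rw [IsPrimitiveRoot.coe_units_iff, ← Nat.add_sub_cancel (k * f) 1, ← hF,
      ← Fintype.card_units, ← Nat.card_eq_fintype_card,
      ← orderOf_eq_card_of_forall_mem_zpowers hg]
    exact IsPrimitiveRoot.orderOf g
  have := Fintype.one_lt_card (α := F)
  exact hg'.pow (by omega) (mul_comm k f)

namespace MulChar

variable {R R' : Type*} [CommMonoid R] [CommRing R'] {g : Rˣ}

theorem pow_eq_one_of_apply_generator (hg : ∀ x, x ∈ Subgroup.zpowers g) {χ : MulChar R R'}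
    {n : ℕ} (hn : n ≠ 0) (h : χ g ^ n = 1) : χ ^ n = 1 :=
  (eq_iff hg _ _).mpr (by rw [pow_apply' _ hn, h, one_apply_coe])

theorem ringHomComp_eq_inv (hg : ∀ x, x ∈ Subgroup.zpowers g) {χ : MulChar R R'}
    {σ : R' →+* R'} (h : σ (χ g) * χ g = 1) : χ.ringHomComp σ = χ⁻¹ :=
  eq_inv_of_mul_eq_one_left <| (eq_iff hg _ _).mpr <| by rw [mul_apply, one_apply_coe]; exact h

theorem ringHomComp_eq_powMulChar {F : Type*} [Field F] {g : Fˣ}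
    (hg : ∀ x, x ∈ Subgroup.zpowers g) {χ : MulChar F R'} {φ : R' →+* F} {n : ℕ} (hn : n ≠ 0)
    (h : φ (χ g) = g ^ n) : χ.ringHomComp φ = powMulChar F n hn :=
  (eq_iff hg _ _).mpr h

end MulChar

theorem jacobiSum_mul_jacobiSum_inv_of_isDomain {F R : Type*} [Field F] [Fintype F]
    [CommRing R] [IsDomain R] (h : ringChar R ≠ ringChar F) {χ φ : MulChar F R} (hχ : χ ≠ 1)
    (hφ : φ ≠ 1) (hχφ : χ * φ ≠ 1) :
    jacobiSum χ φ * jacobiSum χ⁻¹ φ⁻¹ = Fintype.card F := by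
  have hι := IsFractionRing.injective R (FractionRing R)
  apply hι
  rw [map_mul, ← jacobiSum_ringHomComp, ← jacobiSum_ringHomComp, ← MulChar.ringHomComp_inv,
    ← MulChar.ringHomComp_inv, map_natCast]
  refine jacobiSum_mul_jacobiSum_inv ?_ ((MulChar.ringHomComp_ne_one_iff hι).mpr hχ)
    ((MulChar.ringHomComp_ne_one_iff hι).mpr hφ) ?_
  · rwa [ringChar.eq (FractionRing R) (ringChar R)]
  · rw [← MulChar.ringHomComp_mul]
    exact (MulChar.ringHomComp_ne_one_iff hι).mpr hχφ

theorem IsPrimitiveRoot.sq_add_self_add_one {R : Type*} [CommRing R] [IsDomain R] {ζ : R}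
    (h : IsPrimitiveRoot ζ 3) : ζ ^ 2 + ζ + 1 = 0 := by
  simpa [sum_range_succ, add_comm, add_left_comm, add_assoc] using h.geom_sum_eq_zero (by norm_num)

def Algebra.adjoin.gen (R : Type*) {A : Type*} [CommSemiring R] [Semiring A] [Algebra R A]
    (x : A) : adjoin R {x} :=
  ⟨x, self_mem_adjoin_singleton R x⟩

@[simp]
theorem Algebra.adjoin.coe_gen (R : Type*) {A : Type*} [CommSemiring R] [Semiring A]
    [Algebra R A] (x : A) : (adjoin.gen R x : A) = x :=
  rfl

theorem IsPrimitiveRoot.adjoin_gen (R : Type*) {A : Type*} [CommRing R] [CommRing A] [Algebra R A]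
    {x : A} {n : ℕ} (h : IsPrimitiveRoot x n) : IsPrimitiveRoot (adjoin.gen R x) n :=
  h.of_map_of_injective (f := (adjoin R {x}).val) Subtype.val_injective

namespace IsPrimitiveRoot

variable {K : Type*} [Field K] {ω : K}

local notation "ϖ" => adjoin.gen ℤ ω

theorem exists_eq_intCast_add_intCast_mul (hω : IsPrimitiveRoot ω 3) (z : ℤ[ω]) :
    ∃ u v : ℤ, z = u + v * ϖ := by
  suffices ∀ x ∈ ℤ[ω], ∃ u v : ℤ, x = u + v * ω by
    obtain ⟨u, v, h⟩ := this z z.2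
    exact ⟨u, v, Subtype.ext (by simpa using h)⟩
  intro x hx
  induction hx using adjoin_induction with
  | mem x hx => exact ⟨0, 1, by rw [Set.mem_singleton_iff.mp hx]; push_cast; ring⟩
  | algebraMap r => exact ⟨r, 0, by simp⟩
  | add x y _ _ hx hy =>
    obtain ⟨⟨u, v, rfl⟩, ⟨u', v', rfl⟩⟩ := And.intro hx hy
    exact ⟨u + u', v + v', by push_cast; ring⟩
  | mul x y _ _ hx hy =>
    obtain ⟨⟨u, v, rfl⟩, ⟨u', v', rfl⟩⟩ := And.intro hx hy
    exact ⟨u * u' - v * v', u * v' + v * u' - v * v', by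
      push_cast; linear_combination (v * v' : K) * hω.sq_add_self_add_one⟩

variable [CharZero K]

noncomputable def liftAdjoin (hω : IsPrimitiveRoot ω 3) {S : Type*} [CommRing S] (η : S)
    (hη : η ^ 2 + η + 1 = 0) : ℤ[ω] →+* S :=
  ((adjoin.powerBasis' (hω.isIntegral three_pos)).lift η (by
    rw [adjoin.powerBasis'_gen, ← minpoly.algHom_eq (ℤ[ω]).val Subtype.val_injective,
      Subalgebra.coe_val, ← Polynomial.cyclotomic_eq_minpoly hω three_pos,
      Polynomial.cyclotomic_three]
    simpa using hη)).toRingHom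

theorem liftAdjoin_gen (hω : IsPrimitiveRoot ω 3) {S : Type*} [CommRing S] (η : S)
    (hη : η ^ 2 + η + 1 = 0) : hω.liftAdjoin η hη ϖ = η := by
  rw [show ϖ = (adjoin.powerBasis' (hω.isIntegral three_pos)).gen from
    (adjoin.powerBasis'_gen _).symm]
  exact PowerBasis.lift_gen _ η _

noncomputable def conjAdjoin (hω : IsPrimitiveRoot ω 3) : ℤ[ω] →+* ℤ[ω] :=
  hω.liftAdjoin (ϖ ^ 2) ((hω.adjoin_gen ℤ).pow_of_coprime 2 (by norm_num)).sq_add_self_add_one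

theorem conjAdjoin_gen (hω : IsPrimitiveRoot ω 3) : hω.conjAdjoin ϖ = ϖ ^ 2 :=
  hω.liftAdjoin_gen _ _

theorem ringHomComp_conjAdjoin (hω : IsPrimitiveRoot ω 3) {R : Type*} [CommMonoid R] {g : Rˣ}
    (hg : ∀ x, x ∈ Subgroup.zpowers g) {χ : MulChar R ℤ[ω]} (hχ : χ g = ϖ) :
    χ.ringHomComp hω.conjAdjoin = χ⁻¹ :=
  MulChar.ringHomComp_eq_inv hg <| by
    rw [hχ, hω.conjAdjoin_gen, ← pow_succ, (hω.adjoin_gen ℤ).pow_eq_one]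

end IsPrimitiveRoot

section CubicCharacter

variable {K : Type*} [Field K] {ω : K} {F : Type*} [Field F] [Fintype F]

local notation "ϖ" => adjoin.gen ℤ ω

theorem jacobiSum_eq_intCast_add_intCast_mul (hω : IsPrimitiveRoot ω 3)
    {χ ψ : MulChar F ℤ[ω]} (hχ : χ ^ 3 = 1) (hψ : ψ ^ 3 = 1) (hF : 3 ∣ Fintype.card F - 1) :
    ∃ X Y : ℤ, jacobiSum χ ψ = X + Y * ϖ ∧ X ≡ -1 [ZMOD 3] ∧ Y ≡ 0 [ZMOD 3] := by
  obtain ⟨z, -, hz⟩ := exists_jacobiSum_eq_neg_one_add (by norm_num) hχ hψ hF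
    (hω.adjoin_gen ℤ)
  obtain ⟨u, v, rfl⟩ := hω.exists_eq_intCast_add_intCast_mul z
  refine ⟨3 * v - 1, 3 * (v - u), ?_, Int.modEq_iff_dvd.mpr ⟨-v, by ring⟩,
    Int.modEq_iff_dvd.mpr ⟨u - v, by ring⟩⟩
  rw [hz]
  push_cast
  linear_combination (u + v * ϖ - 3 * v) * (hω.adjoin_gen ℤ).sq_add_self_add_one

variable [CharZero K] {g : Fˣ} {χ : MulChar F ℤ[ω]}

theorem sq_sub_mul_add_sq_eq_card_of_jacobiSum_eq (hω : IsPrimitiveRoot ω 3)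
    (hg : ∀ x, x ∈ Subgroup.zpowers g) (hχ : χ g = ϖ) {X Y : ℤ}
    (hJ : jacobiSum χ χ = X + Y * ϖ) :
    X ^ 2 - X * Y + Y ^ 2 = Fintype.card F := by
  have hϖ := hω.adjoin_gen ℤ
  have hχ1 : χ ≠ 1 := fun h => hϖ.ne_one (by norm_num) (by rw [← hχ, h, MulChar.one_apply_coe])
  have hχ2 : χ * χ ≠ 1 := fun h => hϖ.pow_ne_one_of_pos_of_lt two_ne_zero (by norm_num)
    (by rw [sq, ← hχ, ← MulChar.mul_apply, h, MulChar.one_apply_coe])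
  have hchar : ringChar ℤ[ω] ≠ ringChar F := by
    rw [ringChar.eq_zero]
    exact (CharP.ringChar_ne_zero_of_finite F).symm
  have h := jacobiSum_mul_jacobiSum_inv_of_isDomain hchar hχ1 hχ1 hχ2
  rw [← hω.ringHomComp_conjAdjoin hg hχ, jacobiSum_ringHomComp, hJ] at h
  simp only [map_add, map_mul, map_intCast, hω.conjAdjoin_gen] at h
  have : ((X ^ 2 - X * Y + Y ^ 2 : ℤ) : ℤ[ω]) = ((Fintype.card F : ℤ) : ℤ[ω]) := by
    push_cast
    linear_combination h - (X * Y + Y ^ 2 * (ϖ - 1)) * hϖ.sq_add_self_add_one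
  exact_mod_cast this

theorem neg_one_pow_mul_choose_eq_of_jacobiSum_eq (hω : IsPrimitiveRoot ω 3)
    (hg : ∀ x, x ∈ Subgroup.zpowers g) (hχ : χ g = ϖ) {f : ℕ} (hF : Fintype.card F = 3 * f + 1)
    {X Y : ℤ} (hJ : jacobiSum χ χ = X + Y * ϖ) :
    (-1) ^ f * ((2 * f).choose f : F) = Y - 2 * X := by
  have hf : f ≠ 0 := by
    have := Fintype.one_lt_card (α := F)
    omega
  have hgf := FiniteField.isPrimitiveRoot_generator_pow hg hF
  set red := hω.liftAdjoin _ (hgf.pow_of_coprime 2 (by norm_num)).sq_add_self_add_one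
  have hred : red ϖ = ((g : F) ^ f) ^ 2 := hω.liftAdjoin_gen _ _
  have hχred : χ.ringHomComp red = powMulChar F (2 * f) (by omega) :=
    MulChar.ringHomComp_eq_powMulChar hg _ (by rw [hχ, hred, ← pow_mul, mul_comm])
  have hχinvred : χ⁻¹.ringHomComp red = powMulChar F f hf :=
    MulChar.ringHomComp_eq_powMulChar hg _ <| by
      rw [← hω.ringHomComp_conjAdjoin hg hχ, MulChar.ringHomComp_apply, hχ, hω.conjAdjoin_gen,
        map_pow, hred]
      calc _ = ((g : F) ^ f) ^ 3 * (g : F) ^ f := by ring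
        _ = _ := by rw [hgf.pow_eq_one, one_mul]
  have hJred : red (jacobiSum χ χ) = -((-1) ^ f * ((2 * f).choose f : F)) := by
    rw [← jacobiSum_ringHomComp, hχred, jacobiSum_powMulChar,
      FiniteField.sum_pow_mul_one_sub_pow (by omega) (by omega) (by omega),
      show Fintype.card F - 1 - 2 * f = f by omega]
  have hJinvred : red (jacobiSum χ⁻¹ χ⁻¹) = 0 := by
    rw [← jacobiSum_ringHomComp, hχinvred, jacobiSum_powMulChar,
      FiniteField.sum_pow_mul_one_sub_pow (by omega) (by omega) (by omega),
      Nat.choose_eq_zero_of_lt (by omega), Nat.cast_zero, mul_zero, neg_zero]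
  rw [hJ] at hJred
  rw [← hω.ringHomComp_conjAdjoin hg hχ, jacobiSum_ringHomComp, hJ] at hJinvred
  simp only [map_add, map_mul, map_intCast, hω.conjAdjoin_gen, map_pow, hred] at hJred hJinvred
  linear_combination hJred + hJinvred -
    Y * (((g : F) ^ f) ^ 2 - (g : F) ^ f + 1) * hgf.sq_add_self_add_one

end CubicCharacter

theorem FiniteField.exists_sq_sub_mul_add_sq_eq_card_and_choose_eq (F : Type*) [Field F]
    [Fintype F] {f : ℕ} (hF : Fintype.card F = 3 * f + 1) :
    ∃ X Y : ℤ, X ^ 2 - X * Y + Y ^ 2 = Fintype.card F ∧ X ≡ -1 [ZMOD 3] ∧ Y ≡ 0 [ZMOD 3] ∧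
      (-1) ^ f * ((2 * f).choose f : F) = Y - 2 * X := by
  classical
  obtain ⟨ω, hω⟩ : ∃ ω : ℂ, IsPrimitiveRoot ω 3 :=
    ⟨_, Complex.isPrimitiveRoot_exp 3 (by norm_num)⟩
  have hϖ := hω.adjoin_gen ℤ
  obtain ⟨g, hg⟩ := IsCyclic.exists_generator (α := Fˣ)
  have hroot : (hϖ.isUnit three_ne_zero).unit ∈ rootsOfUnity (Fintype.card Fˣ) ℤ[ω] := by
    rw [mem_rootsOfUnity, Units.ext_iff, Fintype.card_units, hF, Nat.add_sub_cancel, pow_mul]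
    simp [hϖ.pow_eq_one]
  obtain ⟨χ, hχ⟩ : ∃ χ : MulChar F ℤ[ω], χ g = adjoin.gen ℤ ω :=
    ⟨_, MulChar.ofRootOfUnity_spec hroot hg⟩
  have hχ3 : χ ^ 3 = 1 :=
    MulChar.pow_eq_one_of_apply_generator hg three_ne_zero (by rw [hχ, hϖ.pow_eq_one])
  obtain ⟨X, Y, hJ, hX, hY⟩ :=
    jacobiSum_eq_intCast_add_intCast_mul hω hχ3 hχ3 (by rw [hF, Nat.add_sub_cancel]; simp)
  exact ⟨X, Y, sq_sub_mul_add_sq_eq_card_of_jacobiSum_eq hω hg hχ hJ, hX, hY,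
    neg_one_pow_mul_choose_eq_of_jacobiSum_eq hω hg hχ hF hJ⟩

theorem sq_eq_sq_of_sq_add_mul_sq_eq {p d m A B A' B' : ℤ} (hp : Prime p) (hm : 0 < m)
    (hmd : m ^ 2 < d) (h : A ^ 2 + d * B ^ 2 = m * p) (h' : A' ^ 2 + d * B' ^ 2 = m * p) :
    A ^ 2 = A' ^ 2 := by
  -- `p` divides `(A B' - A' B) (A B' + A' B)`; flipping the sign of `B'` swaps the two factors.
  wlog hdvd : p ∣ A * B' - A' * B generalizing B'
  · refine this (B' := -B') (by rwa [neg_sq]) ?_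
    have hprod : p ∣ (A * B' - A' * B) * (A * B' + A' * B) :=
      ⟨m * (B' ^ 2 - B ^ 2), by linear_combination B' ^ 2 * h - B ^ 2 * h'⟩
    rw [show A * -B' - A' * B = -(A * B' + A' * B) by ring, dvd_neg]
    exact (hp.dvd_or_dvd hprod).resolve_left hdvd
  have hp2 : 0 < p ^ 2 := by positivity [hp.ne_zero]
  have hV : A * B' - A' * B = 0 := by
    by_contra hV
    have hle : p ^ 2 ≤ (A * B' - A' * B) ^ 2 :=
      Int.le_of_dvd (by positivity) (pow_dvd_pow_of_dvd hdvd 2)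
    have hid : (A * A' + d * B * B') ^ 2 + d * (A * B' - A' * B) ^ 2 = (m * p) ^ 2 := by
      linear_combination (A' ^ 2 + d * B' ^ 2) * h + m * p * h'
    nlinarith [sq_nonneg (A * A' + d * B * B'), mul_pos (sub_pos.mpr hmd) hp2]
  have hB : m * p * (B' ^ 2 - B ^ 2) = 0 := by
    linear_combination (A * B' + A' * B) * hV - B' ^ 2 * h + B ^ 2 * h'
  rcases mul_eq_zero.mp hB with h0 | h0
  · exact absurd h0 (mul_ne_zero hm.ne' hp.ne_zero)
  · linear_combination h - h' + d * h0

theorem Nat.Prime.exists_sq_add_twentySeven_mul_sq_and_choose_modEq {p f : ℕ} (hp : p.Prime)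
    (hpf : p = 3 * f + 1) :
    ∃ L M : ℤ, L ^ 2 + 27 * M ^ 2 = 4 * p ∧ L ≡ 2 [ZMOD 3] ∧
      ((2 * f).choose f : ℤ) ≡ L [ZMOD p] := by
  have := Fact.mk hp
  obtain ⟨X, Y, hXY, hX, hY, hC⟩ :=
    FiniteField.exists_sq_sub_mul_add_sq_eq_card_and_choose_eq (ZMod p) (f := f) (by simp [hpf])
  have hf : Even f := by
    rcases hp.eq_two_or_odd' with h2 | hodd
    · omega
    · rw [hpf] at hodd
      simpa [parity_simps] using hodd
  rw [hf.neg_one_pow, one_mul] at hC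
  rw [ZMod.card] at hXY
  obtain ⟨M, rfl⟩ : ∃ M, Y = 3 * M := ⟨Y / 3, by unfold Int.ModEq at hY; omega⟩
  refine ⟨3 * M - 2 * X, M, by linear_combination 4 * hXY, ?_, ?_⟩
  · unfold Int.ModEq at hX ⊢
    omega
  · exact (ZMod.intCast_eq_intCast_iff _ _ _).mp (by exact_mod_cast hC)

theorem stmt_6 (p f : ℕ) (hp : p.Prime) (hpf : p = 3 * f + 1)
    (a3 b3 : ℤ) (hrep : (p : ℤ) = a3 ^ 2 + 3 * b3 ^ 2) (ha3 : a3 ≡ 1 [ZMOD 3]) :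
    (b3 ≡ 0 [ZMOD 3] → ((2 * f).choose f : ℤ) ≡ 2 * a3 [ZMOD p]) ∧
    (b3 ≡ 1 [ZMOD 3] → ((2 * f).choose f : ℤ) ≡ -a3 - 3 * b3 [ZMOD p]) ∧
    (b3 ≡ 2 [ZMOD 3] → ((2 * f).choose f : ℤ) ≡ -a3 + 3 * b3 [ZMOD p]) := by
  obtain ⟨L, M, hLM, hL, hC⟩ := hp.exists_sq_add_twentySeven_mul_sq_and_choose_modEq hpf
  have key (T N : ℤ) (hTN : T ^ 2 + 27 * N ^ 2 = 4 * p) (hT : T ≡ 2 [ZMOD 3]) :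
      ((2 * f).choose f : ℤ) ≡ T [ZMOD p] := by
    rcases sq_eq_sq_iff_eq_or_eq_neg.mp (sq_eq_sq_of_sq_add_mul_sq_eq
      (Nat.prime_iff_prime_int.mp hp) (by norm_num) (by norm_num) hLM hTN) with h | h
    · exact h ▸ hC
    · unfold Int.ModEq at hL hT
      omega
  unfold Int.ModEq at ha3
  refine ⟨fun hb => ?_, fun hb => ?_, fun hb => ?_⟩ <;> unfold Int.ModEq at hb
  · obtain ⟨c, rfl⟩ : ∃ c, b3 = 3 * c := ⟨b3 / 3, by omega⟩
    exact key _ (2 * c) (by linear_combination -4 * hrep) (by unfold Int.ModEq; omega)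
  · obtain ⟨c, hc⟩ : ∃ c, a3 - b3 = 3 * c := ⟨(a3 - b3) / 3, by omega⟩
    exact key _ c (by linear_combination -4 * hrep - 3 * (a3 - b3 + 3 * c) * hc)
      (by unfold Int.ModEq; omega)
  · obtain ⟨c, hc⟩ : ∃ c, a3 + b3 = 3 * c := ⟨(a3 + b3) / 3, by omega⟩
    exact key _ c (by linear_combination -4 * hrep - 3 * (a3 + b3 + 3 * c) * hc)
      (by unfold Int.ModEq; omega)
end
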